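/- Let u, v ∈ ℂ and σ ∈ ℝ satisfy Re(u) > 0, Re(v) > 0, and Re(u) + Re(v) + 2σ > 0. Then all the series below converge absolutely and Σ_{d ≥ 1} μ(d)² / d^{1+u+v+2σ} · ( Σ_{ℓ1 ≥ 1, gcd(ℓ1,d)=1} μ(ℓ1)/ℓ1^{1+u} ) · ( Σ_{ℓ2 ≥ 1, gcd(ℓ2,d)=1} μ(ℓ2)/ℓ2^{1+v} ) = ∏_{p prime} ( 1 − p^{−1−u} − p^{−1−v} + p^{−1−u−v−2σ} + p^{−2−u−v} ), where the product over primes converges. -/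

import Mathlib

namespace EulerG2

open ArithmeticFunction Complex

/-- The restricted Möbius term. -/
noncomputable def f (d : ℕ) (s : ℂ) (l : ℕ) : ℂ :=
  if 1 ≤ l ∧ Nat.Coprime l d then (ArithmeticFunction.moebius l : ℂ) / (l : ℂ) ^ s else 0

lemma norm_moebius_le_one (l : ℕ) : ‖((moebius l : ℤ) : ℂ)‖ ≤ 1 := by
  rw [show ((moebius l : ℤ) : ℂ) = ((moebius l : ℝ) : ℂ) by push_cast; ring,
    Complex.norm_real, Real.norm_eq_abs]
  exact_mod_cast ArithmeticFunction.abs_moebius_le_one (n := l)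

lemma f_norm_le (d : ℕ) (s : ℂ) (l : ℕ) : ‖f d s l‖ ≤ ((l : ℝ) ^ s.re)⁻¹ := by
  unfold f
  split_ifs with h
  · obtain ⟨hl, -⟩ := h
    rw [norm_div, Complex.norm_natCast_cpow_of_pos hl]
    rw [div_le_iff₀ (by positivity), inv_mul_cancel₀ (by positivity)]
    exact norm_moebius_le_one l
  · simp; positivity

lemma f_summable_norm (d : ℕ) {s : ℂ} (hs : 1 < s.re) :
    Summable fun l : ℕ => ‖f d s l‖ :=
  Summable.of_nonneg_of_le (fun _ => norm_nonneg _) (f_norm_le d s)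
    (Real.summable_nat_rpow_inv.mpr hs)

lemma f_one (d : ℕ) (s : ℂ) : f d s 1 = 1 := by
  simp [f, Nat.coprime_one_left]

lemma f_zero (d : ℕ) (s : ℂ) : f d s 0 = 0 := by simp [f]

lemma f_mul (d : ℕ) (s : ℂ) {m n : ℕ} (h : Nat.Coprime m n) :
    f d s (m * n) = f d s m * f d s n := by
  rcases Nat.eq_zero_or_pos m with rfl | hm
  · simp [f_zero]
  rcases Nat.eq_zero_or_pos n with rfl | hn
  · simp [f_zero]
  unfold f
  by_cases hmd : Nat.Coprime m d <;> by_cases hnd : Nat.Coprime n d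
  · rw [if_pos (show 1 ≤ m * n ∧ (m * n).Coprime d from
      ⟨Nat.one_le_iff_ne_zero.mpr (Nat.mul_ne_zero hm.ne' hn.ne'),
        Nat.coprime_mul_iff_left.mpr ⟨hmd, hnd⟩⟩),
      if_pos (show 1 ≤ m ∧ m.Coprime d from ⟨hm, hmd⟩),
      if_pos (show 1 ≤ n ∧ n.Coprime d from ⟨hn, hnd⟩)]
    rw [isMultiplicative_moebius.map_mul_of_coprime h]
    push_cast
    rw [show ((m : ℂ) * n) ^ s = (m : ℂ) ^ s * (n : ℂ) ^ s by
      have := Complex.mul_cpow_ofReal_nonneg (a := m) (b := n) (Nat.cast_nonneg m)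
        (Nat.cast_nonneg n) s
      push_cast at this ⊢; exact this]
    rw [div_mul_div_comm]
  · rw [if_neg (show ¬(1 ≤ m * n ∧ (m * n).Coprime d) from
        fun hh => hnd (Nat.coprime_mul_iff_left.mp hh.2).2),
      if_neg (show ¬(1 ≤ n ∧ n.Coprime d) from fun hh => hnd hh.2), mul_zero]
  · rw [if_neg (show ¬(1 ≤ m * n ∧ (m * n).Coprime d) from
        fun hh => hmd (Nat.coprime_mul_iff_left.mp hh.2).1),
      if_neg (show ¬(1 ≤ m ∧ m.Coprime d) from fun hh => hmd hh.2), zero_mul]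
  · rw [if_neg (show ¬(1 ≤ m * n ∧ (m * n).Coprime d) from
        fun hh => hmd (Nat.coprime_mul_iff_left.mp hh.2).1),
      if_neg (show ¬(1 ≤ m ∧ m.Coprime d) from fun hh => hmd hh.2), zero_mul]

lemma f_pow_prime (d : ℕ) (s : ℂ) {p : ℕ} (hp : p.Prime) :
    ∑' e : ℕ, f d s (p ^ e) = if p ∣ d then 1 else 1 - (p : ℂ) ^ (-s) := by
  have h2 : ∀ e : ℕ, 2 ≤ e → f d s (p ^ e) = 0 := by
    intro e he
    have : ¬ Squarefree (p ^ e) := by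
      rw [Nat.squarefree_pow_iff hp.ne_one (by omega)]
      rintro ⟨-, rfl⟩; omega
    simp [f, moebius_eq_zero_of_not_squarefree this]
  rw [tsum_eq_sum (s := {0, 1}) (by
    intro e he
    simp only [Finset.mem_insert, Finset.mem_singleton] at he
    exact h2 e (by omega))]
  rw [Finset.sum_pair (by norm_num)]
  rw [pow_zero, f_one, pow_one]
  unfold f
  by_cases hpd : p ∣ d
  · rw [if_neg, if_pos hpd, add_zero]
    rintro ⟨-, hc⟩
    exact (hp.coprime_iff_not_dvd.mp hc) hpd
  · rw [if_pos ⟨hp.one_lt.le, hp.coprime_iff_not_dvd.mpr hpd⟩, if_neg hpd]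
    rw [moebius_apply_prime hp, Complex.cpow_neg]
    push_cast
    ring

lemma hasProd_A (d : ℕ) {s : ℂ} (hs : 1 < s.re) :
    HasProd (fun p : Nat.Primes => if (p : ℕ) ∣ d then 1 else 1 - ((p : ℕ) : ℂ) ^ (-s))
      (∑' l, f d s l) := by
  have := EulerProduct.eulerProduct_hasProd (f := f d s) (f_one d s)
    (fun {m n} h => f_mul d s h) (f_summable_norm d hs) (f_zero d s)
  convert this using 2 with p
  exact (f_pow_prime d s p.2).symm

lemma one_sub_cpow_ne {p : ℕ} (hp : p.Prime) {s : ℂ} (hs : 1 < s.re) :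
    1 - (p : ℂ) ^ (-s) ≠ 0 := by
  intro h
  have h1 : (p : ℂ) ^ (-s) = 1 := by linear_combination -h
  have h2 : ‖(p : ℂ) ^ (-s)‖ < 1 := by
    rw [Complex.norm_natCast_cpow_of_pos hp.pos]
    have : (-s).re < 0 := by simp; linarith
    exact Real.rpow_lt_one_of_one_lt_of_neg (by exact_mod_cast hp.one_lt) this
  rw [h1] at h2; simp at h2

noncomputable def primesOf (d : ℕ) : Finset Nat.Primes :=
  d.primeFactors.attach.map
    ⟨fun q => (⟨q.1, Nat.prime_of_mem_primeFactors q.2⟩ : Nat.Primes),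
     by intro a b hab; exact Subtype.ext (congrArg (fun x : Nat.Primes => (x : ℕ)) hab)⟩

lemma mem_primesOf {d : ℕ} (hd : d ≠ 0) (p : Nat.Primes) :
    p ∈ primesOf d ↔ (p : ℕ) ∣ d := by
  constructor
  · rintro hp
    simp only [primesOf, Finset.mem_map, Finset.mem_attach, Function.Embedding.coeFn_mk,
      true_and] at hp
    obtain ⟨q, hq⟩ := hp
    have := q.2
    rw [Nat.mem_primeFactors] at this
    rw [← hq]
    exact this.2.1
  · intro hp
    have hmem : (p : ℕ) ∈ d.primeFactors := Nat.mem_primeFactors.mpr ⟨p.2, hp, hd⟩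
    simp only [primesOf, Finset.mem_map, Finset.mem_attach, Function.Embedding.coeFn_mk,
      true_and]
    exact ⟨⟨(p : ℕ), hmem⟩, Subtype.ext rfl⟩

lemma hasProd_b {d : ℕ} (hd : d ≠ 0) (s : ℂ) :
    HasProd (fun p : Nat.Primes => if (p : ℕ) ∣ d then 1 - ((p : ℕ) : ℂ) ^ (-s) else 1)
      (∏ q ∈ d.primeFactors, (1 - (q : ℂ) ^ (-s))) := by
  have h1 : ∀ p : Nat.Primes, p ∉ primesOf d →
      (if (p : ℕ) ∣ d then 1 - ((p : ℕ) : ℂ) ^ (-s) else 1) = 1 := by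
    intro p hp
    rw [if_neg (fun hdvd => hp ((mem_primesOf hd p).mpr hdvd))]
  have : HasProd _ _ := hasProd_prod_of_ne_finset_one h1
  convert this using 1
  rw [primesOf, Finset.prod_map]
  show _ = ∏ x ∈ d.primeFactors.attach, (if (x : ℕ) ∣ d then 1 - ((x : ℕ) : ℂ) ^ (-s) else 1)
  rw [← Finset.prod_attach d.primeFactors (fun q => 1 - (q : ℂ) ^ (-s))]
  refine Finset.prod_congr rfl fun q _ => ?_
  rw [if_pos (Nat.dvd_of_mem_primeFactors q.2)]

lemma hasProd_A1 {s : ℂ} (hs : 1 < s.re) :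
    HasProd (fun p : Nat.Primes => 1 - ((p : ℕ) : ℂ) ^ (-s)) (∑' l, f 1 s l) := by
  have := hasProd_A 1 hs
  convert this using 2 with p
  rw [if_neg (Nat.Prime.not_dvd_one p.2)]

lemma A_mul_P {d : ℕ} (hd : d ≠ 0) {s : ℂ} (hs : 1 < s.re) :
    (∑' l, f d s l) * ∏ q ∈ d.primeFactors, (1 - (q : ℂ) ^ (-s)) = ∑' l, f 1 s l := by
  have hab := (hasProd_A d hs).mul (hasProd_b hd s)
  have heq : (fun p : Nat.Primes =>
      (if (p : ℕ) ∣ d then 1 else 1 - ((p : ℕ) : ℂ) ^ (-s)) *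
        (if (p : ℕ) ∣ d then 1 - ((p : ℕ) : ℂ) ^ (-s) else 1)) =
      fun p : Nat.Primes => 1 - ((p : ℕ) : ℂ) ^ (-s) := by
    funext p
    by_cases hpd : (p : ℕ) ∣ d <;> simp [hpd]
  rw [heq] at hab
  exact hab.unique (hasProd_A1 hs)

lemma P_ne {d : ℕ} {s : ℂ} (hs : 1 < s.re) :
    ∏ q ∈ d.primeFactors, (1 - (q : ℂ) ^ (-s)) ≠ 0 :=
  Finset.prod_ne_zero_iff.mpr fun q hq =>
    one_sub_cpow_ne (Nat.prime_of_mem_primeFactors hq) hs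

lemma A_eq {d : ℕ} (hd : d ≠ 0) {s : ℂ} (hs : 1 < s.re) :
    (∑' l, f d s l) = (∑' l, f 1 s l) *
      ∏ q ∈ d.primeFactors, (1 - (q : ℂ) ^ (-s))⁻¹ := by
  rw [Finset.prod_inv_distrib, eq_comm, mul_inv_eq_iff_eq_mul₀ (P_ne hs), eq_comm,
    A_mul_P hd hs]

lemma A1_ne {s : ℂ} (hs : 1 < s.re) : (∑' l, f 1 s l) ≠ 0 := by
  have h : (∑' l, f 1 s l) = LSeries (fun n => ((moebius n : ℤ) : ℂ)) s := by
    refine tsum_congr fun l => ?_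
    rw [LSeries.term]
    rcases Nat.eq_zero_or_pos l with rfl | hl
    · simp [f]
    · rw [if_neg (by omega), f, if_pos ⟨hl, Nat.coprime_one_right l⟩]
  rw [h]
  exact right_ne_zero_of_mul_eq_one (LSeries_zeta_mul_Lseries_moebius hs)

noncomputable def m (s₀ s₁ s₂ : ℂ) (d : ℕ) : ℂ :=
  if d = 0 then 0 else (moebius d : ℂ) ^ 2 / (d : ℂ) ^ s₀ *
    ∏ p ∈ d.primeFactors, ((1 - (p : ℂ) ^ (-s₁))⁻¹ * (1 - (p : ℂ) ^ (-s₂))⁻¹)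

lemma m_one (s₀ s₁ s₂ : ℂ) : m s₀ s₁ s₂ 1 = 1 := by
  simp [m, Complex.one_cpow]

lemma m_zero (s₀ s₁ s₂ : ℂ) : m s₀ s₁ s₂ 0 = 0 := by simp [m]

lemma natCast_mul_cpow (a b : ℕ) (s : ℂ) :
    (((a * b : ℕ) : ℂ)) ^ s = ((a : ℂ)) ^ s * ((b : ℂ)) ^ s := by
  have := Complex.mul_cpow_ofReal_nonneg (a := a) (b := b) (Nat.cast_nonneg a)
    (Nat.cast_nonneg b) s
  push_cast at this ⊢
  exact this

lemma m_mul (s₀ s₁ s₂ : ℂ) {a b : ℕ} (h : Nat.Coprime a b) :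
    m s₀ s₁ s₂ (a * b) = m s₀ s₁ s₂ a * m s₀ s₁ s₂ b := by
  rcases Nat.eq_zero_or_pos a with rfl | ha
  · simp [m_zero]
  rcases Nat.eq_zero_or_pos b with rfl | hb
  · simp [m_zero]
  unfold m
  rw [if_neg (Nat.mul_ne_zero ha.ne' hb.ne'), if_neg ha.ne', if_neg hb.ne']
  rw [Nat.primeFactors_mul ha.ne' hb.ne',
    Finset.prod_union h.disjoint_primeFactors,
    isMultiplicative_moebius.map_mul_of_coprime h,
    natCast_mul_cpow a b s₀]
  push_cast
  field_simp

lemma m_pow_prime (s₀ s₁ s₂ : ℂ) {p : ℕ} (hp : p.Prime) :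
    ∑' e : ℕ, m s₀ s₁ s₂ (p ^ e) =
      1 + (p : ℂ) ^ (-s₀) * ((1 - (p : ℂ) ^ (-s₁))⁻¹ * (1 - (p : ℂ) ^ (-s₂))⁻¹) := by
  have h2 : ∀ e : ℕ, 2 ≤ e → m s₀ s₁ s₂ (p ^ e) = 0 := by
    intro e he
    have h : ¬ Squarefree (p ^ e) := by
      rw [Nat.squarefree_pow_iff hp.ne_one (by omega)]
      rintro ⟨-, rfl⟩; omega
    simp [m, moebius_eq_zero_of_not_squarefree h, pow_eq_zero_iff, hp.ne_zero]
  rw [tsum_eq_sum (s := {0, 1}) (by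
    intro e he
    simp only [Finset.mem_insert, Finset.mem_singleton] at he
    exact h2 e (by omega))]
  rw [Finset.sum_pair (by norm_num), pow_zero, m_one, pow_one]
  unfold m
  rw [if_neg hp.ne_zero, hp.primeFactors, Finset.prod_singleton,
    moebius_apply_prime hp]
  simp only [Complex.cpow_neg]
  push_cast
  ring

noncomputable def Fterm (s₀ s₁ s₂ : ℂ) (d : ℕ) : ℂ :=
  if 1 ≤ d then
    (moebius d : ℂ) ^ 2 / (d : ℂ) ^ s₀ * (∑' l, f d s₁ l) * (∑' l, f d s₂ l)
  else 0

end EulerG2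

open EulerG2

/-- The Dirichlet series `G₂(u,v;σ)` factors as an Euler product:
`Σ_d μ(d)²/d^{1+u+v+2σ} (Σ_{(ℓ₁,d)=1} μ(ℓ₁)/ℓ₁^{1+u}) (Σ_{(ℓ₂,d)=1} μ(ℓ₂)/ℓ₂^{1+v})
  = ∏_p (1 − p^{−1−u} − p^{−1−v} + p^{−1−u−v−2σ} + p^{−2−u−v})`. -/
theorem euler_product_G2 (u v : ℂ) (σ : ℝ)
    (hu : 0 < u.re) (hv : 0 < v.re)
    (huv : 0 < u.re + v.re + 2 * σ) :
    (∀ d : ℕ, Summable (fun l1 : ℕ =>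
        ‖if 1 ≤ l1 ∧ Nat.Coprime l1 d then
            (ArithmeticFunction.moebius l1 : ℂ) / (l1 : ℂ) ^ (1 + u)
          else 0‖)) ∧
    (∀ d : ℕ, Summable (fun l2 : ℕ =>
        ‖if 1 ≤ l2 ∧ Nat.Coprime l2 d then
            (ArithmeticFunction.moebius l2 : ℂ) / (l2 : ℂ) ^ (1 + v)
          else 0‖)) ∧
    Summable (fun d : ℕ =>
      ‖if 1 ≤ d then
          (ArithmeticFunction.moebius d : ℂ) ^ 2 / (d : ℂ) ^ (1 + u + v + 2 * (σ : ℂ)) *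
          (∑' l1 : ℕ, if 1 ≤ l1 ∧ Nat.Coprime l1 d then
              (ArithmeticFunction.moebius l1 : ℂ) / (l1 : ℂ) ^ (1 + u) else 0) *
          (∑' l2 : ℕ, if 1 ≤ l2 ∧ Nat.Coprime l2 d then
              (ArithmeticFunction.moebius l2 : ℂ) / (l2 : ℂ) ^ (1 + v) else 0)
        else 0‖) ∧
    Multipliable (fun p : Nat.Primes =>
      1 - ((p : ℕ) : ℂ) ^ (-1 - u) - ((p : ℕ) : ℂ) ^ (-1 - v)
        + ((p : ℕ) : ℂ) ^ (-1 - u - v - 2 * (σ : ℂ))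
        + ((p : ℕ) : ℂ) ^ (-2 - u - v)) ∧
    (∑' d : ℕ, if 1 ≤ d then
        (ArithmeticFunction.moebius d : ℂ) ^ 2 / (d : ℂ) ^ (1 + u + v + 2 * (σ : ℂ)) *
        (∑' l1 : ℕ, if 1 ≤ l1 ∧ Nat.Coprime l1 d then
            (ArithmeticFunction.moebius l1 : ℂ) / (l1 : ℂ) ^ (1 + u) else 0) *
        (∑' l2 : ℕ, if 1 ≤ l2 ∧ Nat.Coprime l2 d then
            (ArithmeticFunction.moebius l2 : ℂ) / (l2 : ℂ) ^ (1 + v) else 0)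
      else 0)
    = ∏' p : Nat.Primes,
        (1 - ((p : ℕ) : ℂ) ^ (-1 - u) - ((p : ℕ) : ℂ) ^ (-1 - v)
          + ((p : ℕ) : ℂ) ^ (-1 - u - v - 2 * (σ : ℂ))
          + ((p : ℕ) : ℂ) ^ (-2 - u - v)) := by
  set s₁ : ℂ := 1 + u with hs₁def
  set s₂ : ℂ := 1 + v with hs₂def
  set s₀ : ℂ := 1 + u + v + 2 * (σ : ℂ) with hs₀def
  have hs₁ : 1 < s₁.re := by
    simp only [hs₁def, Complex.add_re, Complex.one_re]; linarith
  have hs₂ : 1 < s₂.re := by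
    simp only [hs₂def, Complex.add_re, Complex.one_re]; linarith
  have hs₀ : 1 < s₀.re := by
    simp only [hs₀def, Complex.add_re, Complex.one_re, Complex.mul_re,
      Complex.ofReal_re, Complex.ofReal_im, Complex.re_ofNat, Complex.im_ofNat,
      mul_zero, sub_zero]
    linarith
  have hF_le : ∀ d : ℕ, ‖Fterm s₀ s₁ s₂ d‖ ≤
      ((∑' l : ℕ, ((l : ℝ) ^ s₁.re)⁻¹) * (∑' l : ℕ, ((l : ℝ) ^ s₂.re)⁻¹)) *
        ((d : ℝ) ^ s₀.re)⁻¹ := by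
    have hsum₁ : Summable fun l : ℕ => ((l : ℝ) ^ s₁.re)⁻¹ :=
      Real.summable_nat_rpow_inv.mpr hs₁
    have hsum₂ : Summable fun l : ℕ => ((l : ℝ) ^ s₂.re)⁻¹ :=
      Real.summable_nat_rpow_inv.mpr hs₂
    have hK₁0 : 0 ≤ ∑' l : ℕ, ((l : ℝ) ^ s₁.re)⁻¹ := tsum_nonneg fun l => by positivity
    have hK₂0 : 0 ≤ ∑' l : ℕ, ((l : ℝ) ^ s₂.re)⁻¹ := tsum_nonneg fun l => by positivity
    have hA_le₁ : ∀ d : ℕ, ‖∑' l, f d s₁ l‖ ≤ ∑' l : ℕ, ((l : ℝ) ^ s₁.re)⁻¹ := fun d =>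
      (norm_tsum_le_tsum_norm (f_summable_norm d hs₁)).trans
        (Summable.tsum_le_tsum (f_norm_le d s₁) (f_summable_norm d hs₁) hsum₁)
    have hA_le₂ : ∀ d : ℕ, ‖∑' l, f d s₂ l‖ ≤ ∑' l : ℕ, ((l : ℝ) ^ s₂.re)⁻¹ := fun d =>
      (norm_tsum_le_tsum_norm (f_summable_norm d hs₂)).trans
        (Summable.tsum_le_tsum (f_norm_le d s₂) (f_summable_norm d hs₂) hsum₂)
    intro d
    rcases Nat.eq_zero_or_pos d with rfl | hd
    · rw [Fterm]
      rw [if_neg (by omega : ¬ (1 ≤ 0)), norm_zero]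
      positivity
    · rw [Fterm]
      rw [if_pos (show (1:ℕ) ≤ d from hd)]
      rw [norm_mul, norm_mul, norm_div, norm_pow,
        Complex.norm_natCast_cpow_of_pos hd]
      have hmu : ‖((ArithmeticFunction.moebius d : ℤ) : ℂ)‖ ^ 2 / ((d : ℝ) ^ s₀.re)
          ≤ ((d : ℝ) ^ s₀.re)⁻¹ := by
        rw [div_le_iff₀ (by positivity), inv_mul_cancel₀ (by positivity)]
        calc ‖((ArithmeticFunction.moebius d : ℤ) : ℂ)‖ ^ 2 ≤ 1 ^ 2 := by
              gcongr
              exact norm_moebius_le_one d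
          _ = 1 := one_pow 2
      calc ‖((ArithmeticFunction.moebius d : ℤ) : ℂ)‖ ^ 2 / ((d : ℝ) ^ s₀.re) *
            ‖∑' l, f d s₁ l‖ * ‖∑' l, f d s₂ l‖
          ≤ ((d : ℝ) ^ s₀.re)⁻¹ * (∑' l : ℕ, ((l : ℝ) ^ s₁.re)⁻¹) *
            (∑' l : ℕ, ((l : ℝ) ^ s₂.re)⁻¹) := by
            exact mul_le_mul (mul_le_mul hmu (hA_le₁ d) (norm_nonneg _)
              (by positivity)) (hA_le₂ d) (norm_nonneg _) (by positivity)
        _ = ((∑' l : ℕ, ((l : ℝ) ^ s₁.re)⁻¹) * (∑' l : ℕ, ((l : ℝ) ^ s₂.re)⁻¹)) *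
            ((d : ℝ) ^ s₀.re)⁻¹ := by ring
  have hFsummable : Summable fun d : ℕ => ‖Fterm s₀ s₁ s₂ d‖ := by
    refine Summable.of_nonneg_of_le (fun d => norm_nonneg _) hF_le ?_
    exact (Real.summable_nat_rpow_inv.mpr hs₀).mul_left _
  have hCne : (∑' l, f 1 s₁ l) * (∑' l, f 1 s₂ l) ≠ 0 :=
    mul_ne_zero (A1_ne hs₁) (A1_ne hs₂)
  have hFC : ∀ d : ℕ, Fterm s₀ s₁ s₂ d =
      ((∑' l, f 1 s₁ l) * (∑' l, f 1 s₂ l)) * m s₀ s₁ s₂ d := by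
    intro d
    rcases Nat.eq_zero_or_pos d with rfl | hd
    · rw [Fterm, if_neg (by omega : ¬ (1 ≤ 0)), m_zero, mul_zero]
    · rw [Fterm]
      rw [if_pos (show (1:ℕ) ≤ d from hd)]
      rw [A_eq hd.ne' hs₁, A_eq hd.ne' hs₂, m, if_neg hd.ne',
        Finset.prod_mul_distrib]
      ring
  have hmsummable : Summable fun d : ℕ => ‖m s₀ s₁ s₂ d‖ := by
    have h1 : Summable fun d : ℕ =>
        ‖(∑' l, f 1 s₁ l) * (∑' l, f 1 s₂ l)‖⁻¹ * ‖Fterm s₀ s₁ s₂ d‖ :=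
      hFsummable.mul_left _
    refine h1.congr fun d => ?_
    have h2 : ‖Fterm s₀ s₁ s₂ d‖ =
        ‖(∑' l, f 1 s₁ l) * (∑' l, f 1 s₂ l)‖ * ‖m s₀ s₁ s₂ d‖ := by
      rw [hFC d]; exact norm_mul _ _
    rw [h2, ← mul_assoc, inv_mul_cancel₀ (norm_ne_zero_iff.mpr hCne), one_mul]
  have hEP := EulerProduct.eulerProduct_hasProd (f := m s₀ s₁ s₂) (m_one s₀ s₁ s₂)
    (fun {a b} h => m_mul s₀ s₁ s₂ h) hmsummable (m_zero s₀ s₁ s₂)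
  have hE : HasProd (fun p : Nat.Primes =>
      1 + ((p : ℕ) : ℂ) ^ (-s₀) * ((1 - ((p : ℕ) : ℂ) ^ (-s₁))⁻¹ *
        (1 - ((p : ℕ) : ℂ) ^ (-s₂))⁻¹)) (∑' n, m s₀ s₁ s₂ n) := by
    convert hEP using 2 with p
    exact (m_pow_prime s₀ s₁ s₂ p.2).symm
  have htot := ((hasProd_A1 (s := s₁) hs₁).mul (hasProd_A1 (s := s₂) hs₂)).mul hE
  have hkey : ∀ p : Nat.Primes,
      (1 - ((p : ℕ) : ℂ) ^ (-s₁)) * (1 - ((p : ℕ) : ℂ) ^ (-s₂)) *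
        (1 + ((p : ℕ) : ℂ) ^ (-s₀) * ((1 - ((p : ℕ) : ℂ) ^ (-s₁))⁻¹ *
          (1 - ((p : ℕ) : ℂ) ^ (-s₂))⁻¹)) =
      1 - ((p : ℕ) : ℂ) ^ (-1 - u) - ((p : ℕ) : ℂ) ^ (-1 - v)
        + ((p : ℕ) : ℂ) ^ (-1 - u - v - 2 * (σ : ℂ))
        + ((p : ℕ) : ℂ) ^ (-2 - u - v) := by
    intro p
    have hx : ((p : ℕ) : ℂ) ≠ 0 := Nat.cast_ne_zero.mpr p.2.ne_zero
    have e1 : (-1 - u : ℂ) = -s₁ := by rw [hs₁def]; ring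
    have e2 : (-1 - v : ℂ) = -s₂ := by rw [hs₂def]; ring
    have e3 : (-1 - u - v - 2 * (σ : ℂ)) = -s₀ := by rw [hs₀def]; ring
    have e4 : ((p : ℕ) : ℂ) ^ (-2 - u - v : ℂ) =
        ((p : ℕ) : ℂ) ^ (-s₁) * ((p : ℕ) : ℂ) ^ (-s₂) := by
      rw [← Complex.cpow_add _ _ hx]
      congr 1
      rw [hs₁def, hs₂def]; ring
    rw [e3, e1, e2, e4]
    have ha := one_sub_cpow_ne p.2 hs₁
    have hb := one_sub_cpow_ne p.2 hs₂
    field_simp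
    ring
  rw [show (fun p : Nat.Primes =>
      (1 - ((p : ℕ) : ℂ) ^ (-s₁)) * (1 - ((p : ℕ) : ℂ) ^ (-s₂)) *
        (1 + ((p : ℕ) : ℂ) ^ (-s₀) * ((1 - ((p : ℕ) : ℂ) ^ (-s₁))⁻¹ *
          (1 - ((p : ℕ) : ℂ) ^ (-s₂))⁻¹))) =
      fun p : Nat.Primes =>
      1 - ((p : ℕ) : ℂ) ^ (-1 - u) - ((p : ℕ) : ℂ) ^ (-1 - v)
        + ((p : ℕ) : ℂ) ^ (-1 - u - v - 2 * (σ : ℂ))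
        + ((p : ℕ) : ℂ) ^ (-2 - u - v) from funext hkey] at htot
  have heq : (∑' d, Fterm s₀ s₁ s₂ d) = ∏' p : Nat.Primes,
      (1 - ((p : ℕ) : ℂ) ^ (-1 - u) - ((p : ℕ) : ℂ) ^ (-1 - v)
        + ((p : ℕ) : ℂ) ^ (-1 - u - v - 2 * (σ : ℂ))
        + ((p : ℕ) : ℂ) ^ (-2 - u - v)) := by
    rw [htot.tprod_eq]
    rw [tsum_congr hFC, tsum_mul_left]
  exact ⟨fun d => f_summable_norm d hs₁, fun d => f_summable_norm d hs₂,
    hFsummable, htot.multipliable, heq⟩
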